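/- Let E ⊆ X be a Borel subset of a metric space, u : E → ℝ^k a map that is L-biLipschitz with its image, and μ a finite Borel measure on X concentrated on E such that u_*(μ) ≪ ℒ^k (Lebesgue measure on ℝ^k). Then μ ≪ H^k, the k-dimensional Hausdorff measure on X. -/

import Mathlib

open MeasureTheory Measure
open scoped NNReal

/-!
A map that is `K`-Lipschitz on `E` multiplies `H^d` by at most `K^d`, so it sends `H^d`-null
subsets of `E` to `H^d`-null sets. On `ℝ^k` both `H^k` and Lebesgue measure are additive Haar
measures, hence mutually absolutely continuous, so `u_* μ ≪ H^k`. An `H^k`-null set `s` then has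
`μ (s ∩ E) ≤ u_* μ (u '' (s ∩ E)) = 0`, and `μ` does not see the complement of `E`.
-/

theorem LipschitzOnWith.absolutelyContinuous_hausdorffMeasure_of_map
    {X Y : Type*} [EMetricSpace X] [MeasurableSpace X] [BorelSpace X]
    [EMetricSpace Y] [MeasurableSpace Y] [BorelSpace Y]
    {K : ℝ≥0} {f : X → Y} {E : Set X} (hf : LipschitzOnWith K f E)
    {μ : Measure X} (hfμ : AEMeasurable f μ) (hE : μ Eᶜ = 0)
    {d : ℝ} (hd : 0 ≤ d) (hmap : μ.map f ≪ μH[d]) :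
    μ ≪ μH[d] := by
  intro s hs
  have himage : μH[d] (f '' (s ∩ E)) = 0 := by
    refine nonpos_iff_eq_zero.mp ?_
    calc μH[d] (f '' (s ∩ E)) ≤ K ^ d * μH[d] (s ∩ E) :=
          (hf.mono Set.inter_subset_right).hausdorffMeasure_image_le hd
      _ = 0 := by rw [measure_mono_null Set.inter_subset_left hs, mul_zero]
  have hsE : μ (s ∩ E) = 0 :=
    nonpos_iff_eq_zero.mp ((le_map_apply_image hfμ _).trans_eq (hmap himage))
  rw [← Set.inter_union_compl s E]
  exact measure_union_null hsE (measure_mono_null Set.inter_subset_right hE)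

theorem absolutelyContinuous_hausdorff_of_pushforward_general
    {X : Type*} [MetricSpace X] [MeasurableSpace X] [BorelSpace X]
    (k : ℕ) (E : Set X) (u : X → EuclideanSpace ℝ (Fin k)) (hu : Measurable u)
    (L : ℝ)
    (hbil : ∀ x ∈ E, ∀ y ∈ E,
      L⁻¹ * dist x y ≤ ‖u x - u y‖ ∧ ‖u x - u y‖ ≤ L * dist x y)
    (μ : Measure X) (hconc : μ Eᶜ = 0)
    (habs : μ.map u ≪ volume) :
    μ ≪ μH[(k : ℝ)] := by
  have hlip : LipschitzOnWith L.toNNReal u E :=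
    LipschitzOnWith.of_dist_le' fun x hx y hy => by
      simpa only [dist_eq_norm] using (hbil x hx y hy).2
  have hvolume : (volume : Measure (EuclideanSpace ℝ (Fin k))) ≪ μH[k] :=
    absolutelyContinuous_isAddHaarMeasure _ _
  exact hlip.absolutelyContinuous_hausdorffMeasure_of_map hu.aemeasurable hconc k.cast_nonneg
    (habs.trans hvolume)

/-- If `μ` is a finite Borel measure concentrated on `E`, `u` is `L`-biLipschitz with its
image on `E`, and `u_* μ ≪ ℒ^k`, then `μ ≪ H^k`. -/
theorem absolutelyContinuous_hausdorff_of_pushforward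
    {X : Type*} [MetricSpace X] [MeasurableSpace X] [BorelSpace X]
    (k : ℕ) (E : Set X) (u : X → EuclideanSpace ℝ (Fin k)) (hu : Measurable u)
    (L : ℝ) (hL : 1 ≤ L)
    (hbil : ∀ x ∈ E, ∀ y ∈ E,
      L⁻¹ * dist x y ≤ ‖u x - u y‖ ∧ ‖u x - u y‖ ≤ L * dist x y)
    (μ : Measure X) [IsFiniteMeasure μ] (hconc : μ Eᶜ = 0)
    (habs : μ.map u ≪ volume) :
    μ ≪ μH[(k : ℝ)] :=
  absolutelyContinuous_hausdorff_of_pushforward_general k E u hu L hbil μ hconc habs
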